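/- For ζ ∈ (0,1) set g(ζ) = 2ζ/(1−ζ²) + ln((1−ζ)/(1+ζ)). Then g(ζ) > 0 on (0,1), and for any constant C ∈ ℝ the function f(ζ) = C · g(ζ)^{1/3} is twice differentiable on (0,1) and satisfies the ordinary differential equation ( f''(ζ)·f(ζ)² + 2·f'(ζ)²·f(ζ) )·ζ·(1−ζ²) − 2·f'(ζ)·f(ζ)²·(1+ζ²) = 0 for all ζ ∈ (0,1). (This is the reduced Euler–Lagrange equation for the SO(3)-equivariant σ₃-critical extended Hwa–Bjorken field.) -/

import Mathlib

/-!
Writing `h = f³`, the left-hand side of the equation is `(ζ(1−ζ²)h'' − 2(1+ζ²)h')/3`, which is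
linear in `h`. Since `f³ = C³g`, it suffices that `g' = 4ζ²/(1−ζ²)²` satisfies
`ζ(1−ζ²)g'' = 2(1+ζ²)g'`, which holds because `g'' = 8ζ(1+ζ²)/(1−ζ²)³`. Positivity of `g` follows
from `g 0 = 0` and `g' > 0` on `(0,1)`.
-/

open scoped BigOperators

noncomputable section

def gHB (ζ : ℝ) : ℝ := 2 * ζ / (1 - ζ ^ 2) + Real.log ((1 - ζ) / (1 + ζ))

/-- `gHB ζ ^ (1/3)` is the real cube root only because `gHB ζ > 0` on `(0,1)`. -/
def fHB (C : ℝ) (ζ : ℝ) : ℝ := C * gHB ζ ^ ((1 : ℝ) / 3)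

open Set Filter Topology

section Cube

variable {𝕜 : Type*} [NontriviallyNormedField 𝕜] {f : 𝕜 → 𝕜} {x : 𝕜}

lemma hasDerivAt_cube (hf : DifferentiableAt 𝕜 f x) :
    HasDerivAt (fun y => f y ^ 3) (3 * f x ^ 2 * deriv f x) x := by
  simpa using hf.hasDerivAt.fun_pow 3

lemma hasDerivAt_deriv_cube (hf : ∀ᶠ y in 𝓝 x, DifferentiableAt 𝕜 f y)
    (hf' : DifferentiableAt 𝕜 (deriv f) x) :
    HasDerivAt (deriv fun y => f y ^ 3)
      (3 * (f x ^ 2 * deriv (deriv f) x + 2 * f x * deriv f x ^ 2)) x := by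
  have hderiv : deriv (fun y => f y ^ 3) =ᶠ[𝓝 x] fun y => 3 * f y ^ 2 * deriv f y :=
    hf.mono fun y hy => (hasDerivAt_cube hy).deriv
  have hprod := (((hf.self_of_nhds.hasDerivAt.fun_pow 2).const_mul 3).mul hf'.hasDerivAt)
  refine (hprod.congr_of_eventuallyEq hderiv).congr_deriv ?_
  push_cast
  ring

end Cube

lemma contDiffOn_gHB : ContDiffOn ℝ 2 gHB (Ioo (-1) 1) := by
  have hsq : ∀ x ∈ Ioo (-1 : ℝ) 1, 1 - x ^ 2 ≠ 0 := fun x hx => by nlinarith [hx.1, hx.2]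
  have hadd : ∀ x ∈ Ioo (-1 : ℝ) 1, 1 + x ≠ 0 := fun x hx => by linarith [hx.1]
  have hquot : ∀ x ∈ Ioo (-1 : ℝ) 1, (1 - x) / (1 + x) ≠ 0 :=
    fun x hx => div_ne_zero (by linarith [hx.2]) (hadd x hx)
  unfold gHB
  fun_prop (disch := assumption)

lemma hasDerivAt_gHB {ζ : ℝ} (hζ : ζ ∈ Ioo (-1) 1) :
    HasDerivAt gHB (4 * ζ ^ 2 / (1 - ζ ^ 2) ^ 2) ζ := by
  obtain ⟨h1, h2⟩ := hζ
  have hsub : (1 : ℝ) - ζ ≠ 0 := by linarith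
  have hadd : (1 : ℝ) + ζ ≠ 0 := by linarith
  have hsq : (1 : ℝ) - ζ ^ 2 ≠ 0 := by nlinarith
  have hrat := ((hasDerivAt_id ζ).const_mul 2).fun_div ((hasDerivAt_pow 2 ζ).const_sub 1) hsq
  have hlog := (((hasDerivAt_id ζ).const_sub 1).fun_div ((hasDerivAt_id ζ).const_add 1) hadd).log
    (div_ne_zero hsub hadd)
  refine (hrat.add hlog).congr_deriv ?_
  simp only [id]
  field_simp
  ring

lemma hasDerivAt_deriv_gHB {ζ : ℝ} (hζ : ζ ∈ Ioo (-1) 1) :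
    HasDerivAt (deriv gHB) (8 * ζ * (1 + ζ ^ 2) / (1 - ζ ^ 2) ^ 3) ζ := by
  have hderiv : deriv gHB =ᶠ[𝓝 ζ] fun x => 4 * x ^ 2 / (1 - x ^ 2) ^ 2 :=
    eventually_of_mem (isOpen_Ioo.mem_nhds hζ) fun x hx => (hasDerivAt_gHB hx).deriv
  have hsq : (1 : ℝ) - ζ ^ 2 ≠ 0 := by nlinarith [hζ.1, hζ.2]
  have h := ((hasDerivAt_pow 2 ζ).const_mul 4).fun_div
    (((hasDerivAt_pow 2 ζ).const_sub 1).fun_pow 2) (pow_ne_zero 2 hsq)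
  refine (h.congr_of_eventuallyEq hderiv).congr_deriv ?_
  field_simp
  ring

lemma gHB_ode {ζ : ℝ} (hζ : ζ ∈ Ioo (-1) 1) :
    deriv (deriv gHB) ζ * ζ * (1 - ζ ^ 2) - 2 * deriv gHB ζ * (1 + ζ ^ 2) = 0 := by
  have hsq : (1 : ℝ) - ζ ^ 2 ≠ 0 := by nlinarith [hζ.1, hζ.2]
  rw [(hasDerivAt_deriv_gHB hζ).deriv, (hasDerivAt_gHB hζ).deriv]
  field_simp
  ring

lemma gHB_pos {ζ : ℝ} (hζ : ζ ∈ Ioo 0 1) : 0 < gHB ζ := by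
  have hmono : StrictMonoOn gHB (Ico 0 1) := by
    refine strictMonoOn_of_deriv_pos (convex_Ico 0 1)
      (contDiffOn_gHB.continuousOn.mono (Ico_subset_Ioo_left (by norm_num))) fun x hx => ?_
    rw [interior_Ico] at hx
    rw [(hasDerivAt_gHB (Ioo_subset_Ioo_left (by norm_num) hx)).deriv]
    obtain ⟨hx0, hx1⟩ := hx
    have hsq : (1 : ℝ) - x ^ 2 ≠ 0 := by nlinarith
    positivity
  have hzero : gHB 0 = 0 := by norm_num [gHB]
  simpa [hzero] using hmono ⟨le_rfl, one_pos⟩ (Ioo_subset_Ico_self hζ) hζ.1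

lemma contDiffOn_fHB (C : ℝ) : ContDiffOn ℝ 2 (fHB C) (Ioo 0 1) :=
  contDiffOn_const.mul <| (contDiffOn_gHB.mono (Ioo_subset_Ioo_left (by norm_num))).rpow_const_of_ne
    fun _ hx => (gHB_pos hx).ne'

lemma fHB_cube (C : ℝ) {ζ : ℝ} (hζ : ζ ∈ Ioo 0 1) : fHB C ζ ^ 3 = C ^ 3 * gHB ζ := by
  have hroot := Real.rpow_inv_natCast_pow (gHB_pos hζ).le three_ne_zero
  rw [fHB, mul_pow, one_div]
  exact congrArg (C ^ 3 * ·) (mod_cast hroot)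

/-- `g > 0` on `(0,1)`, and `f = C·g^{1/3}` is twice
differentiable on `(0,1)` and solves the reduced Euler–Lagrange ODE
`(f''·f² + 2·f'²·f)·ζ·(1−ζ²) − 2·f'·f²·(1+ζ²) = 0`. -/
theorem statement16 (C : ℝ) :
    (∀ ζ ∈ Set.Ioo (0 : ℝ) 1, 0 < gHB ζ) ∧
    ∀ ζ ∈ Set.Ioo (0 : ℝ) 1,
      DifferentiableAt ℝ (fHB C) ζ ∧
      DifferentiableAt ℝ (deriv (fHB C)) ζ ∧
      (deriv (deriv (fHB C)) ζ * fHB C ζ ^ 2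
          + 2 * (deriv (fHB C) ζ) ^ 2 * fHB C ζ) * ζ * (1 - ζ ^ 2)
        - 2 * deriv (fHB C) ζ * fHB C ζ ^ 2 * (1 + ζ ^ 2) = 0 := by
  refine ⟨fun ζ hζ => gHB_pos hζ, fun ζ hζ => ?_⟩
  have hdiff : ∀ᶠ y in 𝓝 ζ, DifferentiableAt ℝ (fHB C) y :=
    ((contDiffOn_fHB C).differentiableOn two_ne_zero).eventually_differentiableAt
      (isOpen_Ioo.mem_nhds hζ)
  have hdiff' : DifferentiableAt ℝ (deriv (fHB C)) ζ :=
    (((contDiffOn_fHB C).deriv_of_isOpen isOpen_Ioo (m := 1) (by norm_num)).differentiableOn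
      one_ne_zero).differentiableAt (isOpen_Ioo.mem_nhds hζ)
  have hcube : (fun y => fHB C y ^ 3) =ᶠ[𝓝 ζ] fun y => C ^ 3 * gHB y :=
    eventually_of_mem (isOpen_Ioo.mem_nhds hζ) fun y hy => fHB_cube C hy
  have hfirst : 3 * fHB C ζ ^ 2 * deriv (fHB C) ζ = C ^ 3 * deriv gHB ζ := by
    rw [← (hasDerivAt_cube hdiff.self_of_nhds).deriv, hcube.deriv_eq, deriv_const_mul_field']
  have hsecond : 3 * (fHB C ζ ^ 2 * deriv (deriv (fHB C)) ζ + 2 * fHB C ζ * deriv (fHB C) ζ ^ 2)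
      = C ^ 3 * deriv (deriv gHB) ζ := by
    rw [← (hasDerivAt_deriv_cube hdiff hdiff').deriv, hcube.deriv.deriv_eq, deriv_const_mul_field',
      deriv_const_mul_field']
  have hode := gHB_ode (Ioo_subset_Ioo_left (by norm_num) hζ)
  refine ⟨hdiff.self_of_nhds, hdiff', ?_⟩
  linear_combination (ζ * (1 - ζ ^ 2) * hsecond - 2 * (1 + ζ ^ 2) * hfirst + C ^ 3 * hode) / 3
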